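/- Let μ ∈ (0,1), σ² = 1 − μ², and τ ≥ 0. Let X ~ N(μ, σ²) and Y ~ N(−μ, σ²). Set α = Φ((−τ − μ)/σ) and β = Φ((−τ + μ)/σ). If β − α + (μ² − √(μ⁴ + 8μ²β))/2 > 0, then D_t > D, where D is the discrimination of X and Y and D_t is the discrimination of the ternary quantizations f_t(X; τ) and f_t(Y; τ). -/

import Mathlib

/-!
For independent `U`, `V` with finite second moments, `E(U - V)² = Var U + Var V + (E U - E V)²`.
Hence both discriminations have the form `(2 v + d²) / (4 v) = 1/2 + d² / (4 v)`: for the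
Gaussians `v = σ² = 1 - μ²` and `d = 2 μ`; the quantized `X` takes the values `1` and `-1` with
probabilities `β` and `α` (and the quantized `Y` with probabilities `α` and `β`), so
`v = α + β - (β - α)²` and `d = 2 (β - α)`. Thus `D_t > D` amounts to `μ² (α + β) < (β - α)²`,
which is the hypothesis on `α`, `β` after squaring `2 (β - α) + μ² > √(μ⁴ + 8 μ² β)`.
-/

open MeasureTheory ProbabilityTheory

/-- The cumulative distribution function `Φ` of the standard normal distribution. -/
noncomputable def stdNormalCDF (x : ℝ) : ℝ :=
  ((ProbabilityTheory.gaussianReal 0 1) (Set.Iic x)).toReal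

/-- Ternary quantization with threshold `τ ≥ 0`: `1` if `x > τ`, `-1` if `x < -τ`,
`0` otherwise. -/
noncomputable def ft (τ x : ℝ) : ℝ := if x > τ then 1 else if x < -τ then -1 else 0

open Set
open scoped ENNReal

namespace ProbabilityTheory

variable {Ω : Type*} {mΩ : MeasurableSpace Ω} {P : Measure Ω} [IsProbabilityMeasure P]

lemma IndepFun.integral_sub_sq {X Y : Ω → ℝ} (hXY : X ⟂ᵢ[P] Y) (hX : MemLp X 2 P)
    (hY : MemLp Y 2 P) :
    ∫ ω, (X ω - Y ω) ^ 2 ∂P = Var[X; P] + Var[Y; P] + (P[X] - P[Y]) ^ 2 := by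
  have hvar := variance_eq_sub (hX.sub hY)
  simp only [variance_sub hX hY, hXY.covariance_eq_zero hX hY, Pi.pow_apply, Pi.sub_apply,
    integral_sub (hX.integrable one_le_two) (hY.integrable one_le_two)] at hvar
  linarith

variable {𝓧 : Type*} {m𝓧 : MeasurableSpace 𝓧} {ν ν' : Measure 𝓧}

lemma IndepFun.integral_comp_sub_comp_sq {X Y : Ω → 𝓧} {f : 𝓧 → ℝ} (hf : Measurable f)
    (hXY : X ⟂ᵢ[P] Y) (hX : HasLaw X ν P) (hY : HasLaw Y ν' P) (hfν : MemLp f 2 ν)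
    (hfν' : MemLp f 2 ν') :
    ∫ ω, (f (X ω) - f (Y ω)) ^ 2 ∂P
      = Var[f; ν] + Var[f; ν'] + (∫ x, f x ∂ν - ∫ x, f x ∂ν') ^ 2 := by
  have hfX : MemLp (f ∘ X) 2 P := by
    rw [← hX.map_eq] at hfν; exact hfν.comp_of_map hX.aemeasurable
  have hfY : MemLp (f ∘ Y) 2 P := by
    rw [← hY.map_eq] at hfν'; exact hfν'.comp_of_map hY.aemeasurable
  have h := (hXY.comp hf hf).integral_sub_sq hfX hfY
  rwa [hX.integral_comp hf.aestronglyMeasurable, hY.integral_comp hf.aestronglyMeasurable,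
    ← variance_map hf.aemeasurable hX.aemeasurable,
    ← variance_map hf.aemeasurable hY.aemeasurable, hX.map_eq, hY.map_eq] at h

end ProbabilityTheory

lemma stdNormalCDF_neg (x : ℝ) : stdNormalCDF (-x) = 1 - stdNormalCDF x := by
  have hsymm : (gaussianReal 0 1).map (fun y ↦ -y) = gaussianReal 0 1 := by
    simpa using gaussianReal_map_neg (μ := 0) (v := 1)
  have : NullSingletonClass (gaussianReal 0 1) := nullSingletonClass_gaussianReal one_ne_zero
  calc stdNormalCDF (-x) = (gaussianReal 0 1).real (Ici x) := by
        rw [stdNormalCDF, ← measureReal_def]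
        conv_lhs => rw [← hsymm]
        rw [map_measureReal_apply measurable_neg measurableSet_Iic, neg_preimage, neg_Iic, neg_neg]
    _ = 1 - (gaussianReal 0 1).real (Iic x) := by
        rw [← measureReal_congr Ioi_ae_eq_Ici, ← compl_Iic,
          probReal_compl_eq_one_sub measurableSet_Iic]

lemma stdNormalCDF_pos (x : ℝ) : 0 < stdNormalCDF x := by
  refine ENNReal.toReal_pos (fun h ↦ ?_) (measure_ne_top _ _)
  have := gaussianReal_absolutelyContinuous' 0 one_ne_zero h
  simp at this

lemma stdNormalCDF_le_one (x : ℝ) : stdNormalCDF x ≤ 1 := measureReal_le_one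

lemma gaussianReal_eq_map_stdGaussian (m σ : ℝ) :
    gaussianReal m (σ ^ 2).toNNReal = (gaussianReal 0 1).map (fun x ↦ σ * x + m) := by
  have hscale : (gaussianReal 0 1).map (σ * ·) = gaussianReal 0 (σ ^ 2).toNNReal := by
    rw [gaussianReal_map_const_mul, mul_zero, mul_one]
    congr
    exact (max_eq_left (sq_nonneg σ)).symm
  rw [← Function.comp_def (· + m) (σ * ·), ← Measure.map_map (by fun_prop) (by fun_prop),
    hscale, gaussianReal_map_add_const, zero_add]

lemma gaussianReal_real_Iic {m σ : ℝ} (hσ : 0 < σ) (t : ℝ) :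
    (gaussianReal m (σ ^ 2).toNNReal).real (Iic t) = stdNormalCDF ((t - m) / σ) := by
  rw [gaussianReal_eq_map_stdGaussian, map_measureReal_apply (by fun_prop) measurableSet_Iic,
    stdNormalCDF, ← measureReal_def]
  congr 1
  ext x
  simp [le_div_iff₀ hσ, mul_comm, le_sub_iff_add_le]

lemma gaussianReal_real_Iio {m σ : ℝ} (hσ : 0 < σ) (t : ℝ) :
    (gaussianReal m (σ ^ 2).toNNReal).real (Iio t) = stdNormalCDF ((t - m) / σ) := by
  have : NullSingletonClass (gaussianReal m (σ ^ 2).toNNReal) :=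
    nullSingletonClass_gaussianReal (by simpa using hσ.ne')
  rw [measureReal_congr Iio_ae_eq_Iic, gaussianReal_real_Iic hσ]

lemma gaussianReal_real_Ioi {m σ : ℝ} (hσ : 0 < σ) (t : ℝ) :
    (gaussianReal m (σ ^ 2).toNNReal).real (Ioi t) = stdNormalCDF ((m - t) / σ) := by
  rw [← compl_Iic, probReal_compl_eq_one_sub measurableSet_Iic, gaussianReal_real_Iic hσ,
    ← stdNormalCDF_neg, ← neg_div, neg_sub]

section TernaryQuantization

lemma measurable_ft (τ : ℝ) : Measurable (ft τ) :=
  Measurable.ite measurableSet_Ioi measurable_const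
    (Measurable.ite measurableSet_Iio measurable_const measurable_const)

lemma abs_ft_le_one (τ x : ℝ) : |ft τ x| ≤ 1 := by
  unfold ft; split_ifs <;> norm_num

variable {τ : ℝ}

lemma ft_eq_indicator_sub_indicator (hτ : 0 ≤ τ) :
    ft τ = (Ioi τ).indicator 1 - (Iio (-τ)).indicator 1 := by
  ext x
  by_cases h : x < -τ
  · simp [ft, h, show ¬ τ < x by linarith]
  · by_cases h' : τ < x <;> simp [ft, h, h']

lemma ft_sq_eq_indicator_add_indicator (hτ : 0 ≤ τ) :
    ft τ ^ 2 = (Ioi τ).indicator 1 + (Iio (-τ)).indicator 1 := by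
  ext x
  by_cases h : x < -τ
  · simp [ft, h, show ¬ τ < x by linarith]
  · by_cases h' : τ < x <;> simp [ft, h, h']

variable (ν : Measure ℝ) [IsProbabilityMeasure ν]

lemma memLp_ft (p : ℝ≥0∞) : MemLp (ft τ) p ν :=
  MemLp.of_bound (measurable_ft τ).aestronglyMeasurable 1
    (Filter.Eventually.of_forall (abs_ft_le_one τ))

lemma integral_ft (hτ : 0 ≤ τ) :
    ∫ x, ft τ x ∂ν = ν.real (Ioi τ) - ν.real (Iio (-τ)) := by
  rw [ft_eq_indicator_sub_indicator hτ,
    integral_sub' ((integrable_const 1).indicator measurableSet_Ioi)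
      ((integrable_const 1).indicator measurableSet_Iio),
    integral_indicator_one measurableSet_Ioi, integral_indicator_one measurableSet_Iio]

lemma variance_ft (hτ : 0 ≤ τ) :
    Var[ft τ; ν]
      = ν.real (Ioi τ) + ν.real (Iio (-τ)) - (ν.real (Ioi τ) - ν.real (Iio (-τ))) ^ 2 := by
  rw [variance_eq_sub (memLp_ft ν 2), ← integral_ft ν hτ, ft_sq_eq_indicator_add_indicator hτ,
    integral_add' ((integrable_const 1).indicator measurableSet_Ioi)
      ((integrable_const 1).indicator measurableSet_Iio),
    integral_indicator_one measurableSet_Ioi, integral_indicator_one measurableSet_Iio]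

end TernaryQuantization

lemma gaussian_discrimination_lt_ternary {μ α β : ℝ} (hμ : μ ^ 2 < 1) (hα : 0 < α)
    (hβ₀ : 0 ≤ β) (hβ₁ : β ≤ 1)
    (hcond : β - α + (μ ^ 2 - Real.sqrt (μ ^ 4 + 8 * μ ^ 2 * β)) / 2 > 0) :
    (2 * (1 - μ ^ 2) + (2 * μ) ^ 2) / (4 * (1 - μ ^ 2))
      < (2 * (α + β - (β - α) ^ 2) + (2 * (β - α)) ^ 2)
          / (4 * (α + β - (β - α) ^ 2)) := by
  have hsqrt : μ ^ 2 ≤ Real.sqrt (μ ^ 4 + 8 * μ ^ 2 * β) :=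
    Real.le_sqrt_of_sq_le (by nlinarith)
  have hlt : μ ^ 4 + 8 * μ ^ 2 * β < (2 * (β - α) + μ ^ 2) ^ 2 :=
    (Real.sqrt_lt' (by linarith [Real.sqrt_nonneg (μ ^ 4 + 8 * μ ^ 2 * β)])).mp (by linarith)
  have key : μ ^ 2 * (α + β) < (β - α) ^ 2 := by nlinarith
  have hvar : 0 < α + β - (β - α) ^ 2 := by nlinarith
  rw [div_lt_div_iff₀ (by linarith) (by positivity)]
  nlinarith

theorem ternary_quantization_enhances_discrimination_general
    {Ω : Type*} [MeasureSpace Ω] [IsProbabilityMeasure (ℙ : Measure Ω)]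
    (μ σ τ : ℝ) (hσpos : 0 < σ) (hσ2 : σ ^ 2 = 1 - μ ^ 2)
    (hτ : 0 ≤ τ)
    (X₁ X₂ Y₁ Y₂ : Ω → ℝ)
    (hmX₁ : Measurable X₁) (hmX₂ : Measurable X₂)
    (hmY₁ : Measurable Y₁) (hmY₂ : Measurable Y₂)
    (hX₁ : Measure.map X₁ ℙ = gaussianReal μ (Real.toNNReal (σ ^ 2)))
    (hX₂ : Measure.map X₂ ℙ = gaussianReal μ (Real.toNNReal (σ ^ 2)))
    (hY₁ : Measure.map Y₁ ℙ = gaussianReal (-μ) (Real.toNNReal (σ ^ 2)))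
    (hY₂ : Measure.map Y₂ ℙ = gaussianReal (-μ) (Real.toNNReal (σ ^ 2)))
    (hindep : iIndepFun ![X₁, X₂, Y₁, Y₂] ℙ)
    (α β : ℝ)
    (hα : α = stdNormalCDF ((-τ - μ) / σ))
    (hβ : β = stdNormalCDF ((-τ + μ) / σ))
    (hcond : β - α + (μ ^ 2 - Real.sqrt (μ ^ 4 + 8 * μ ^ 2 * β)) / 2 > 0) :
    (∫ ω, (ft τ (X₁ ω) - ft τ (Y₁ ω)) ^ 2 ∂ℙ) /
        ((∫ ω, (ft τ (X₁ ω) - ft τ (X₂ ω)) ^ 2 ∂ℙ) +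
          (∫ ω, (ft τ (Y₁ ω) - ft τ (Y₂ ω)) ^ 2 ∂ℙ)) >
      (∫ ω, (X₁ ω - Y₁ ω) ^ 2 ∂ℙ) /
        ((∫ ω, (X₁ ω - X₂ ω) ^ 2 ∂ℙ) + (∫ ω, (Y₁ ω - Y₂ ω) ^ 2 ∂ℙ)) := by
  have lX₁ : HasLaw X₁ _ ℙ := ⟨hmX₁.aemeasurable, hX₁⟩
  have lX₂ : HasLaw X₂ _ ℙ := ⟨hmX₂.aemeasurable, hX₂⟩
  have lY₁ : HasLaw Y₁ _ ℙ := ⟨hmY₁.aemeasurable, hY₁⟩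
  have lY₂ : HasLaw Y₂ _ ℙ := ⟨hmY₂.aemeasurable, hY₂⟩
  have iX₁X₂ : X₁ ⟂ᵢ X₂ := hindep.indepFun (i := 0) (j := 1) (by decide)
  have iX₁Y₁ : X₁ ⟂ᵢ Y₁ := hindep.indepFun (i := 0) (j := 2) (by decide)
  have iY₁Y₂ : Y₁ ⟂ᵢ Y₂ := hindep.indepFun (i := 2) (j := 3) (by decide)
  have hft (m : ℝ) : MemLp (ft τ) 2 (gaussianReal m (σ ^ 2).toNNReal) := memLp_ft _ 2
  have hid (m : ℝ) : MemLp (fun x ↦ x) 2 (gaussianReal m (σ ^ 2).toNNReal) :=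
    memLp_id_gaussianReal 2
  have hmid : Measurable fun x : ℝ ↦ x := measurable_id
  rw [iX₁Y₁.integral_comp_sub_comp_sq (measurable_ft τ) lX₁ lY₁ (hft _) (hft _),
    iX₁X₂.integral_comp_sub_comp_sq (measurable_ft τ) lX₁ lX₂ (hft _) (hft _),
    iY₁Y₂.integral_comp_sub_comp_sq (measurable_ft τ) lY₁ lY₂ (hft _) (hft _),
    iX₁Y₁.integral_comp_sub_comp_sq hmid lX₁ lY₁ (hid _) (hid _),
    iX₁X₂.integral_comp_sub_comp_sq hmid lX₁ lX₂ (hid _) (hid _),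
    iY₁Y₂.integral_comp_sub_comp_sq hmid lY₁ lY₂ (hid _) (hid _)]
  have hv : ((σ ^ 2).toNNReal : ℝ) = 1 - μ ^ 2 := by
    rw [Real.coe_toNNReal _ (sq_nonneg σ), hσ2]
  have hXβ : stdNormalCDF ((μ - τ) / σ) = β := by rw [hβ, neg_add_eq_sub]
  have hYα : stdNormalCDF ((-μ - τ) / σ) = α := by rw [hα, neg_sub_comm]
  simp only [variance_ft _ hτ, integral_ft _ hτ, gaussianReal_real_Ioi hσpos,
    gaussianReal_real_Iio hσpos, variance_fun_id_gaussianReal, integral_id_gaussianReal,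
    hv, sub_neg_eq_add, ← hα, ← hβ, hXβ, hYα]
  have hμ2 : μ ^ 2 < 1 := by linarith [pow_pos hσpos 2]
  convert gaussian_discrimination_lt_ternary hμ2 (hα ▸ stdNormalCDF_pos _)
    (hβ ▸ (stdNormalCDF_pos _).le) (hβ ▸ stdNormalCDF_le_one _) hcond using 2 <;> ring

/-- Ternary quantization can enhance feature discrimination: if
`β - α + (μ² - √(μ⁴ + 8μ²β))/2 > 0` then `D_t > D`. -/
theorem ternary_quantization_enhances_discrimination
    {Ω : Type*} [MeasureSpace Ω] [IsProbabilityMeasure (ℙ : Measure Ω)]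
    (μ σ τ : ℝ) (hμ : μ ∈ Set.Ioo (0 : ℝ) 1) (hσpos : 0 < σ) (hσ2 : σ ^ 2 = 1 - μ ^ 2)
    (hτ : 0 ≤ τ)
    (X₁ X₂ Y₁ Y₂ : Ω → ℝ)
    (hmX₁ : Measurable X₁) (hmX₂ : Measurable X₂)
    (hmY₁ : Measurable Y₁) (hmY₂ : Measurable Y₂)
    (hX₁ : Measure.map X₁ ℙ = gaussianReal μ (Real.toNNReal (σ ^ 2)))
    (hX₂ : Measure.map X₂ ℙ = gaussianReal μ (Real.toNNReal (σ ^ 2)))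
    (hY₁ : Measure.map Y₁ ℙ = gaussianReal (-μ) (Real.toNNReal (σ ^ 2)))
    (hY₂ : Measure.map Y₂ ℙ = gaussianReal (-μ) (Real.toNNReal (σ ^ 2)))
    (hindep : iIndepFun ![X₁, X₂, Y₁, Y₂] ℙ)
    (α β : ℝ)
    (hα : α = stdNormalCDF ((-τ - μ) / σ))
    (hβ : β = stdNormalCDF ((-τ + μ) / σ))
    (hcond : β - α + (μ ^ 2 - Real.sqrt (μ ^ 4 + 8 * μ ^ 2 * β)) / 2 > 0) :
    (∫ ω, (ft τ (X₁ ω) - ft τ (Y₁ ω)) ^ 2 ∂ℙ) /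
        ((∫ ω, (ft τ (X₁ ω) - ft τ (X₂ ω)) ^ 2 ∂ℙ) +
          (∫ ω, (ft τ (Y₁ ω) - ft τ (Y₂ ω)) ^ 2 ∂ℙ)) >
      (∫ ω, (X₁ ω - Y₁ ω) ^ 2 ∂ℙ) /
        ((∫ ω, (X₁ ω - X₂ ω) ^ 2 ∂ℙ) + (∫ ω, (Y₁ ω - Y₂ ω) ^ 2 ∂ℙ)) :=
  ternary_quantization_enhances_discrimination_general μ σ τ hσpos hσ2 hτ X₁ X₂ Y₁ Y₂ hmX₁ hmX₂ hmY₁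
    hmY₂ hX₁ hX₂ hY₁ hY₂ hindep α β hα hβ hcond
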